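/- arXiv:2310.14962 — 5 statements merged into one kernel-verified Lean document; each statement's English description precedes it below -/
import Mathlib

section
/- Let 0 < w₁ < w₂ and l > 0, and set z = (√w₁·l, √w₂·l) ∈ ℝ². For θ ∈ (0, π/2), let u = (cos θ, sin θ). Then the angle between u and z is greater than π/4 (equivalently (u·z)/(‖u‖‖z‖) < 1/√2) if and only if θ < (1/2)·arctan((w₂ − w₁)/(2√(w₁w₂))). -/
/-!
Write `a = √w₁`, `b = √w₂` and let `ψ = arctan (b / a)` be the polar angle of `z`. Since
`a cos θ + b sin θ = √(a² + b²) cos (θ - ψ)`, the quotient is `cos (θ - ψ)`, so the angle between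
`u` and `z` is `|θ - ψ|`. As `π/4 ≤ ψ < π/2` and `0 < θ < π/2`, it exceeds `π/4` exactly when
`θ < ψ - π/4`, and `2ψ - π/2 = arctan (b/a) - arctan (a/b) = arctan ((b² - a²) / (2ab))` by the
addition formula for `arctan`.
-/

open Real

theorem cos_lt_cos_iff_abs_lt_abs {x y : ℝ} (hx : |x| ≤ π) (hy : |y| ≤ π) :
    cos x < cos y ↔ |y| < |x| := by
  rw [← cos_abs x, ← cos_abs y]
  exact strictAntiOn_cos.lt_iff_gt ⟨abs_nonneg x, hx⟩ ⟨abs_nonneg y, hy⟩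

theorem mul_cos_add_mul_sin_eq {a : ℝ} (ha : 0 < a) (b θ : ℝ) :
    a * cos θ + b * sin θ = √(a ^ 2 + b ^ 2) * cos (θ - arctan (b / a)) := by
  have hsqrt : √(1 + (b / a) ^ 2) = √(a ^ 2 + b ^ 2) / a := by
    rw [show 1 + (b / a) ^ 2 = (a ^ 2 + b ^ 2) / a ^ 2 by field_simp,
      sqrt_div' _ (sq_nonneg a), sqrt_sq ha.le]
  have hpos : 0 < √(a ^ 2 + b ^ 2) := sqrt_pos.2 (by positivity)
  rw [cos_sub, cos_arctan, sin_arctan, hsqrt]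
  field_simp

theorem two_mul_arctan_div_sub_pi_div_two {a b : ℝ} (ha : 0 < a) (hb : 0 < b) :
    2 * arctan (b / a) - π / 2 = arctan ((b ^ 2 - a ^ 2) / (2 * (a * b))) := by
  have hinv : π / 2 - arctan (b / a) = arctan (a / b) := by
    rw [← arctan_inv_of_pos (div_pos hb ha), inv_div]
  rw [show 2 * arctan (b / a) - π / 2 = arctan (b / a) + arctan (-(a / b)) by
      rw [arctan_neg, ← hinv]; ring,
    arctan_add (by field_simp; norm_num)]
  congr 1
  field_simp
  ring

theorem cos_mul_add_sin_mul_div_eq_cos_sub_arctan {a l : ℝ} (ha : 0 < a) (hl : 0 < l) (b θ : ℝ) :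
    (cos θ * (a * l) + sin θ * (b * l)) /
        (√(cos θ ^ 2 + sin θ ^ 2) * √((a * l) ^ 2 + (b * l) ^ 2)) =
      cos (θ - arctan (b / a)) := by
  have hpos : 0 < √(a ^ 2 + b ^ 2) := sqrt_pos.2 (by positivity)
  rw [cos_sq_add_sin_sq, sqrt_one, one_mul,
    show (a * l) ^ 2 + (b * l) ^ 2 = (a ^ 2 + b ^ 2) * l ^ 2 by ring,
    sqrt_mul (by positivity), sqrt_sq hl.le,
    show cos θ * (a * l) + sin θ * (b * l) = (a * cos θ + b * sin θ) * l by ring,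
    mul_cos_add_mul_sin_eq ha]
  field_simp

/-- for the square-type net with weights `w₁ < w₂` and
`z = (√w₁·l, √w₂·l)`, the angle between `u = (cos θ, sin θ)` and `z`
exceeds `π/4` iff `θ < (1/2) arctan ((w₂ - w₁)/(2√(w₁w₂)))`. -/
theorem stmt_1 (w₁ w₂ l : ℝ) (hw₁ : 0 < w₁) (hw : w₁ < w₂) (hl : 0 < l)
    (θ : ℝ) (hθ : θ ∈ Set.Ioo 0 (π / 2)) :
    (Real.cos θ * (Real.sqrt w₁ * l) + Real.sin θ * (Real.sqrt w₂ * l)) /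
        (Real.sqrt (Real.cos θ ^ 2 + Real.sin θ ^ 2) *
          Real.sqrt ((Real.sqrt w₁ * l) ^ 2 + (Real.sqrt w₂ * l) ^ 2)) < 1 / Real.sqrt 2 ↔
      θ < (1 / 2) * Real.arctan ((w₂ - w₁) / (2 * Real.sqrt (w₁ * w₂))) := by
  obtain ⟨hθ₀, hθ₁⟩ := hθ
  have ha : 0 < √w₁ := sqrt_pos.2 hw₁
  have hb : 0 < √w₂ := sqrt_pos.2 (hw₁.trans hw)
  have hrhs : (1 / 2) * arctan ((w₂ - w₁) / (2 * √(w₁ * w₂))) = arctan (√w₂ / √w₁) - π / 4 := by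
    rw [← sq_sqrt hw₁.le, ← sq_sqrt (hw₁.trans hw).le, sqrt_mul (sq_nonneg _), sqrt_sq ha.le,
      sqrt_sq hb.le, ← two_mul_arctan_div_sub_pi_div_two ha hb]
    ring
  have hψ₁ : π / 4 ≤ arctan (√w₂ / √w₁) := by
    rw [← arctan_one]
    exact arctan_strictMono.monotone ((one_le_div ha).2 (sqrt_le_sqrt hw.le))
  have hψ₂ : arctan (√w₂ / √w₁) < π / 2 := arctan_lt_pi_div_two _
  rw [cos_mul_add_sin_mul_div_eq_cos_sub_arctan ha hl, hrhs, ← sqrt_div_self', ← cos_pi_div_four,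
    cos_lt_cos_iff_abs_lt_abs (by rw [abs_le]; constructor <;> linarith)
      (by rw [abs_le]; constructor <;> linarith [pi_pos]), abs_of_pos (by positivity : 0 < π / 4),
    lt_abs]
  constructor
  · rintro (h | h) <;> linarith
  · intro h; right; linarith
end

section
/- Let v₁ = (1, 0) and v₂ = (x, y) with x ≥ 0 and y > 0 (linearly independent vectors in ℝ²). For θ ∈ [0, 2π), let R(θ) be rotation by θ and set z(θ) = R(θ)^{−1}(ε₁(θ)v₁ + ε₂(θ)v₂) where εₖ(θ) = sign((R(θ)e₁)·vₖ) (defined for all but finitely many θ). Let M = (1/(2π))∫₀^{2π} z(θ)⊗z(θ) dθ. Then δ = M₁₁ − M₂₂ = 4y/π > 0. -/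
open Real Matrix MeasureTheory

/-- Rotation of the plane by angle `θ`. -/
noncomputable def Rot (θ : ℝ) : Matrix (Fin 2) (Fin 2) ℝ :=
  !![Real.cos θ, -Real.sin θ; Real.sin θ, Real.cos θ]

/-- Auxiliary integrand. -/
noncomputable def Hfun (x y σ θ : ℝ) : ℝ :=
  (1 + x ^ 2 - y ^ 2) * Real.cos (2 * θ) + 2 * x * y * Real.sin (2 * θ) +
    σ * (2 * x * Real.cos (2 * θ) + 2 * y * Real.sin (2 * θ))

/-- Auxiliary antiderivative of `Hfun`. -/
noncomputable def Kfun (x y σ θ : ℝ) : ℝ :=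
  (1 + x ^ 2 - y ^ 2) / 2 * Real.sin (2 * θ) - x * y * Real.cos (2 * θ) +
    σ * (x * Real.sin (2 * θ) - y * Real.cos (2 * θ))

lemma Kfun_hasDerivAt (x y σ θ : ℝ) : HasDerivAt (Kfun x y σ) (Hfun x y σ θ) θ := by
  have h2θ : HasDerivAt (fun t : ℝ => 2 * t) 2 θ := by
    simpa using (hasDerivAt_id θ).const_mul (2 : ℝ)
  have hsin : HasDerivAt (fun t : ℝ => Real.sin (2 * t)) (2 * Real.cos (2 * θ)) θ := by
    simpa [Function.comp_def, mul_comm] using (Real.hasDerivAt_sin (2 * θ)).comp θ h2θ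
  have hcos : HasDerivAt (fun t : ℝ => Real.cos (2 * t)) (-(2 * Real.sin (2 * θ))) θ := by
    simpa [Function.comp_def, mul_comm] using (Real.hasDerivAt_cos (2 * θ)).comp θ h2θ
  have h := ((hsin.const_mul ((1 + x ^ 2 - y ^ 2) / 2)).sub (hcos.const_mul (x * y))).add
    (((hsin.const_mul x).sub (hcos.const_mul y)).const_mul σ)
  have hv : Hfun x y σ θ = (1 + x ^ 2 - y ^ 2) / 2 * (2 * Real.cos (2 * θ)) -
      x * y * -(2 * Real.sin (2 * θ)) +
      σ * (x * (2 * Real.cos (2 * θ)) - y * -(2 * Real.sin (2 * θ))) := by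
    unfold Hfun; ring
  rw [hv]; exact h

lemma Hfun_continuous (x y σ : ℝ) : Continuous (Hfun x y σ) := by
  unfold Hfun; fun_prop

lemma Hfun_integral (x y σ a b : ℝ) :
    ∫ θ in a..b, Hfun x y σ θ = Kfun x y σ b - Kfun x y σ a :=
  intervalIntegral.integral_eq_sub_of_hasDerivAt (fun θ _ => Kfun_hasDerivAt x y σ θ)
    ((Hfun_continuous x y σ).intervalIntegrable a b)

set_option maxHeartbeats 1000000 in
/-- for `v₁ = (1,0)` and `v₂ = (x,y)` with `x ≥ 0`, `y > 0`, the
average anisotropy `δ = M₁₁ - M₂₂` of `z(θ) ⊗ z(θ)` equals `4y/π > 0`. -/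
theorem stmt_4 (x y : ℝ) (hx : 0 ≤ x) (hy : 0 < y)
    (ε₁ ε₂ : ℝ → ℝ)
    (h1 : ∀ θ, ε₁ θ = 1 ∨ ε₁ θ = -1) (h2 : ∀ θ, ε₂ θ = 1 ∨ ε₂ θ = -1)
    (hs1 : ∀ θ, ((Rot θ).mulVec ![1, 0] ⬝ᵥ ![(1:ℝ), 0]) ≠ 0 →
      ε₁ θ = Real.sign ((Rot θ).mulVec ![1, 0] ⬝ᵥ ![(1:ℝ), 0]))
    (hs2 : ∀ θ, ((Rot θ).mulVec ![1, 0] ⬝ᵥ ![x, y]) ≠ 0 →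
      ε₂ θ = Real.sign ((Rot θ).mulVec ![1, 0] ⬝ᵥ ![x, y]))
    (z : ℝ → Fin 2 → ℝ)
    (hz : ∀ θ, z θ = (Rot θ)ᵀ.mulVec (ε₁ θ • ![(1:ℝ), 0] + ε₂ θ • ![x, y])) :
    (1 / (2 * π)) * ∫ θ in (0:ℝ)..(2 * π), (z θ 0 ^ 2 - z θ 1 ^ 2) = 4 * y / π := by
  have hπ := Real.pi_pos
  -- basic setup on r and φ
  set r := Real.sqrt (x ^ 2 + y ^ 2) with hrdef
  have hr2 : r ^ 2 = x ^ 2 + y ^ 2 := Real.sq_sqrt (by positivity)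
  have hr : 0 < r := Real.sqrt_pos.mpr (by positivity)
  have hxr : x < r := by nlinarith [hr.le]
  set φ := Real.arccos (x / r) with hφdef
  have hφpos : 0 < φ := Real.arccos_pos.mpr ((div_lt_one hr).mpr hxr)
  have hφle : φ ≤ π / 2 := Real.arccos_le_pi_div_two.mpr (by positivity)
  have hcosφ : Real.cos φ = x / r :=
    Real.cos_arccos (le_trans (by norm_num : (-1:ℝ) ≤ 0) (by positivity))
      ((div_lt_one hr).mpr hxr).le
  have hsinφ : Real.sin φ = y / r := by
    rw [hφdef, Real.sin_arccos, show 1 - (x / r) ^ 2 = (y / r) ^ 2 by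
      field_simp; nlinarith]
    exact Real.sqrt_sq (by positivity)
  -- dot products
  have hd1 : ∀ θ, ((Rot θ).mulVec ![1, 0] ⬝ᵥ ![(1:ℝ), 0]) = Real.cos θ := by
    intro θ; simp [Rot, mulVec, dotProduct, Fin.sum_univ_two]
  have hd2 : ∀ θ, ((Rot θ).mulVec ![1, 0] ⬝ᵥ ![x, y]) = x * Real.cos θ + y * Real.sin θ := by
    intro θ; simp [Rot, mulVec, dotProduct, Fin.sum_univ_two]; ring
  have hrep : ∀ θ, x * Real.cos θ + y * Real.sin θ = r * Real.cos (θ - φ) := by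
    intro θ; rw [Real.cos_sub, hcosφ, hsinφ]; field_simp
  -- pointwise identity
  have hpt : ∀ θ, z θ 0 ^ 2 - z θ 1 ^ 2 = Hfun x y (ε₁ θ * ε₂ θ) θ := by
    intro θ
    have hsc := Real.sin_sq_add_cos_sq θ
    unfold Hfun
    rw [Real.cos_two_mul, Real.sin_two_mul]
    rcases h1 θ with h1' | h1' <;> rcases h2 θ with h2' | h2' <;>
      simp only [hz, h1', h2', Rot, mulVec, dotProduct, Fin.sum_univ_two, transpose_apply, of_apply,
        Matrix.cons_val', Matrix.cons_val_zero, Matrix.cons_val_one, Matrix.head_cons,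
        Matrix.head_fin_const, Pi.add_apply, Pi.smul_apply, smul_eq_mul, Matrix.empty_val',
        Matrix.cons_val_fin_one, one_mul, neg_mul, mul_one, mul_neg]
    · linear_combination (-((1 + x) ^ 2 - y ^ 2)) * hsc
    · linear_combination (-((1 - x) ^ 2 - y ^ 2)) * hsc
    · linear_combination (-((-1 + x) ^ 2 - y ^ 2)) * hsc
    · linear_combination (-((1 + x) ^ 2 - y ^ 2)) * hsc
  -- sign determination
  have hε : ∀ θ, Real.cos θ ≠ 0 → x * Real.cos θ + y * Real.sin θ ≠ 0 →
      ε₁ θ * ε₂ θ = Real.sign (Real.cos θ) * Real.sign (x * Real.cos θ + y * Real.sin θ) := by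
    intro θ hc hv
    rw [hs1 θ (by rw [hd1]; exact hc), hs2 θ (by rw [hd2]; exact hv), hd1, hd2]
  -- key per-interval computation
  have hkey : ∀ a b σ : ℝ, a ≤ b → (∀ θ ∈ Set.Ioo a b, ε₁ θ * ε₂ θ = σ) →
      IntervalIntegrable (fun θ => z θ 0 ^ 2 - z θ 1 ^ 2) volume a b ∧
      (∫ θ in a..b, (z θ 0 ^ 2 - z θ 1 ^ 2)) = Kfun x y σ b - Kfun x y σ a := by
    intro a b σ hab hσ
    have hne : ∀ᵐ θ : ℝ, θ ≠ b := by
      rw [ae_iff]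
      simp only [ne_eq, not_not, Set.setOf_eq_eq_singleton]
      exact measure_singleton (b : ℝ)
    have heq : ∀ θ ∈ Set.Ioo a b, z θ 0 ^ 2 - z θ 1 ^ 2 = Hfun x y σ θ := by
      intro θ hθ; rw [hpt θ, hσ θ hθ]
    constructor
    · refine ((Hfun_continuous x y σ).intervalIntegrable a b).congr_ae ?_
      filter_upwards [ae_restrict_of_ae hne, ae_restrict_mem measurableSet_uIoc] with θ hθb hθm
      rw [Set.uIoc_of_le hab] at hθm
      exact (heq θ ⟨hθm.1, lt_of_le_of_ne hθm.2 hθb⟩).symm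
    · rw [← Hfun_integral x y σ a b]
      apply intervalIntegral.integral_congr_ae
      filter_upwards [hne] with θ hθb hθm
      rw [Set.uIoc_of_le hab] at hθm
      exact heq θ ⟨hθm.1, lt_of_le_of_ne hθm.2 hθb⟩
  -- signs on the five intervals
  have hsg : ∀ θ : ℝ, Real.cos θ ≠ 0 → Real.cos (θ - φ) ≠ 0 →
      ε₁ θ * ε₂ θ = Real.sign (Real.cos θ) * Real.sign (r * Real.cos (θ - φ)) := by
    intro θ hc hv
    rw [← hrep θ]
    exact hε θ hc (by rw [hrep θ]; exact mul_ne_zero hr.ne' hv)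
  have hI1 : ∀ θ ∈ Set.Ioo (0:ℝ) (π / 2), ε₁ θ * ε₂ θ = 1 := by
    rintro θ ⟨ha, hb⟩
    have hc : 0 < Real.cos θ := Real.cos_pos_of_mem_Ioo ⟨by linarith, hb⟩
    have hv : 0 < Real.cos (θ - φ) := Real.cos_pos_of_mem_Ioo ⟨by linarith, by linarith⟩
    rw [hsg θ hc.ne' hv.ne', Real.sign_of_pos hc, Real.sign_of_pos (mul_pos hr hv)]
    norm_num
  have hI2 : ∀ θ ∈ Set.Ioo (π / 2) (π / 2 + φ), ε₁ θ * ε₂ θ = -1 := by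
    rintro θ ⟨ha, hb⟩
    have hc : Real.cos θ < 0 := Real.cos_neg_of_pi_div_two_lt_of_lt ha (by linarith)
    have hv : 0 < Real.cos (θ - φ) := Real.cos_pos_of_mem_Ioo ⟨by linarith, by linarith⟩
    rw [hsg θ hc.ne hv.ne', Real.sign_of_neg hc, Real.sign_of_pos (mul_pos hr hv)]
    norm_num
  have hI3 : ∀ θ ∈ Set.Ioo (π / 2 + φ) (3 * π / 2), ε₁ θ * ε₂ θ = 1 := by
    rintro θ ⟨ha, hb⟩
    have hc : Real.cos θ < 0 := Real.cos_neg_of_pi_div_two_lt_of_lt (by linarith) (by linarith)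
    have hv : Real.cos (θ - φ) < 0 :=
      Real.cos_neg_of_pi_div_two_lt_of_lt (by linarith) (by linarith)
    have hv' : r * Real.cos (θ - φ) < 0 := mul_neg_of_pos_of_neg hr hv
    rw [hsg θ hc.ne hv.ne, Real.sign_of_neg hc, Real.sign_of_neg hv']
    norm_num
  have hI4 : ∀ θ ∈ Set.Ioo (3 * π / 2) (3 * π / 2 + φ), ε₁ θ * ε₂ θ = -1 := by
    rintro θ ⟨ha, hb⟩
    have hc : 0 < Real.cos θ := by
      rw [← Real.cos_sub_two_pi]
      exact Real.cos_pos_of_mem_Ioo ⟨by linarith, by linarith⟩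
    have hv : Real.cos (θ - φ) < 0 :=
      Real.cos_neg_of_pi_div_two_lt_of_lt (by linarith) (by linarith)
    have hv' : r * Real.cos (θ - φ) < 0 := mul_neg_of_pos_of_neg hr hv
    rw [hsg θ hc.ne' hv.ne, Real.sign_of_pos hc, Real.sign_of_neg hv']
    norm_num
  have hI5 : ∀ θ ∈ Set.Ioo (3 * π / 2 + φ) (2 * π), ε₁ θ * ε₂ θ = 1 := by
    rintro θ ⟨ha, hb⟩
    have hc : 0 < Real.cos θ := by
      rw [← Real.cos_sub_two_pi]
      exact Real.cos_pos_of_mem_Ioo ⟨by linarith, by linarith⟩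
    have hv : 0 < Real.cos (θ - φ) := by
      rw [← Real.cos_sub_two_pi]
      exact Real.cos_pos_of_mem_Ioo ⟨by linarith, by linarith⟩
    rw [hsg θ hc.ne' hv.ne', Real.sign_of_pos hc, Real.sign_of_pos (mul_pos hr hv)]
    norm_num
  -- the five pieces
  have i1 := hkey 0 (π / 2) 1 (by linarith) hI1
  have i2 := hkey (π / 2) (π / 2 + φ) (-1) (by linarith) hI2
  have i3 := hkey (π / 2 + φ) (3 * π / 2) 1 (by linarith) hI3
  have i4 := hkey (3 * π / 2) (3 * π / 2 + φ) (-1) (by linarith) hI4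
  have i5 := hkey (3 * π / 2 + φ) (2 * π) 1 (by linarith) hI5
  have t1 := intervalIntegral.integral_add_adjacent_intervals i1.1 i2.1
  have t2 := intervalIntegral.integral_add_adjacent_intervals (i1.1.trans i2.1) i3.1
  have t3 := intervalIntegral.integral_add_adjacent_intervals ((i1.1.trans i2.1).trans i3.1) i4.1
  have t4 := intervalIntegral.integral_add_adjacent_intervals
    (((i1.1.trans i2.1).trans i3.1).trans i4.1) i5.1
  rw [← t4, ← t3, ← t2, ← t1, i1.2, i2.2, i3.2, i4.2, i5.2]
  -- trigonometric evaluations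
  have e1s : Real.sin (2 * (0:ℝ)) = 0 := by norm_num
  have e1c : Real.cos (2 * (0:ℝ)) = 1 := by norm_num
  have e2s : Real.sin (2 * (π / 2)) = 0 := by rw [show 2 * (π / 2) = π by ring, Real.sin_pi]
  have e2c : Real.cos (2 * (π / 2)) = -1 := by rw [show 2 * (π / 2) = π by ring, Real.cos_pi]
  have e3s : Real.sin (2 * (π / 2 + φ)) = -Real.sin (2 * φ) := by
    rw [show 2 * (π / 2 + φ) = 2 * φ + π by ring, Real.sin_add_pi]
  have e3c : Real.cos (2 * (π / 2 + φ)) = -Real.cos (2 * φ) := by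
    rw [show 2 * (π / 2 + φ) = 2 * φ + π by ring, Real.cos_add_pi]
  have e4s : Real.sin (2 * (3 * π / 2)) = 0 := by
    rw [show 2 * (3 * π / 2) = π + 2 * π by ring, Real.sin_add_two_pi, Real.sin_pi]
  have e4c : Real.cos (2 * (3 * π / 2)) = -1 := by
    rw [show 2 * (3 * π / 2) = π + 2 * π by ring, Real.cos_add_two_pi, Real.cos_pi]
  have e5s : Real.sin (2 * (3 * π / 2 + φ)) = -Real.sin (2 * φ) := by
    rw [show 2 * (3 * π / 2 + φ) = (2 * φ + π) + 2 * π by ring, Real.sin_add_two_pi,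
      Real.sin_add_pi]
  have e5c : Real.cos (2 * (3 * π / 2 + φ)) = -Real.cos (2 * φ) := by
    rw [show 2 * (3 * π / 2 + φ) = (2 * φ + π) + 2 * π by ring, Real.cos_add_two_pi,
      Real.cos_add_pi]
  have e6s : Real.sin (2 * (2 * π)) = 0 := by
    rw [show 2 * (2 * π) = 2 * π + 2 * π by ring, Real.sin_add_two_pi, Real.sin_two_pi]
  have e6c : Real.cos (2 * (2 * π)) = 1 := by
    rw [show 2 * (2 * π) = 2 * π + 2 * π by ring, Real.cos_add_two_pi, Real.cos_two_pi]
  have eS : Real.sin (2 * φ) = 2 * (x / r) * (y / r) := by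
    rw [Real.sin_two_mul, hcosφ, hsinφ]; ring
  have eC : Real.cos (2 * φ) = 2 * (x / r) ^ 2 - 1 := by
    rw [Real.cos_two_mul, hcosφ]
  simp only [Kfun, e1s, e1c, e2s, e2c, e3s, e3c, e4s, e4c, e5s, e5c, e6s, e6c, eS, eC]
  field_simp
  ring
end

section
/- Let v₁, ..., vₙ ∈ ℝ² be nonzero vectors, no two of which are negative multiples of each other, written vᵢ = (rᵢ cos θᵢ, rᵢ sin θᵢ) with rᵢ > 0 and 0 = θ₁ < θ₂ < ⋯ < θₙ < π. For 1 ≤ i ≤ n define zᵢ = −v₁ − ⋯ − v_{i−1} + vᵢ + ⋯ + vₙ. Then there exists an index i such that zᵢ·(εᵢⱼvⱼ) ≥ 0 for all j, where εᵢⱼ = −1 if i > j and εᵢⱼ = 1 if i ≤ j. Equivalently, some vector zᵢ lies in the closed cone of directions u for which the sign pattern (ε_{i1}, ..., ε_{in}) is realized by u, so the minimal deviation angle of the net is zero. -/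
open Real Matrix

lemma key_pos (p q a b c : ℝ) (hab : a < b) (hab2 : b - a < π)
    (ha : p * Real.cos a + q * Real.sin a ≤ 0)
    (hb : 0 ≤ p * Real.cos b + q * Real.sin b)
    (hc1 : b ≤ c) (hc2 : c ≤ a + π) : 0 ≤ p * Real.cos c + q * Real.sin c := by
  have hid : Real.sin (b - a) * (p * Real.cos c + q * Real.sin c)
      = Real.sin (b - c) * (p * Real.cos a + q * Real.sin a)
        + Real.sin (c - a) * (p * Real.cos b + q * Real.sin b) := by
    simp [Real.sin_sub]; ring
  have h1 : Real.sin (b - c) ≤ 0 := by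
    have h := Real.sin_nonneg_of_nonneg_of_le_pi (x := c - b) (by linarith) (by linarith)
    have : Real.sin (b - c) = - Real.sin (c - b) := by rw [← Real.sin_neg]; ring_nf
    linarith
  have h2 : 0 ≤ Real.sin (c - a) := Real.sin_nonneg_of_nonneg_of_le_pi (by linarith) (by linarith)
  have h3 : 0 < Real.sin (b - a) := Real.sin_pos_of_pos_of_lt_pi (by linarith) hab2
  nlinarith [mul_nonneg h2 hb, mul_nonneg (neg_nonneg.2 h1) (neg_nonneg.2 ha)]

lemma key_neg (p q a b c : ℝ) (hab : a < b) (hab2 : b - a < π)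
    (ha : p * Real.cos a + q * Real.sin a ≤ 0)
    (hb : 0 ≤ p * Real.cos b + q * Real.sin b)
    (hc1 : b - π ≤ c) (hc2 : c ≤ a) : p * Real.cos c + q * Real.sin c ≤ 0 := by
  have hid : Real.sin (b - a) * (p * Real.cos c + q * Real.sin c)
      = Real.sin (b - c) * (p * Real.cos a + q * Real.sin a)
        + Real.sin (c - a) * (p * Real.cos b + q * Real.sin b) := by
    simp [Real.sin_sub]; ring
  have h1 : 0 ≤ Real.sin (b - c) := Real.sin_nonneg_of_nonneg_of_le_pi (by linarith) (by linarith)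
  have h2 : Real.sin (c - a) ≤ 0 := by
    have h := Real.sin_nonneg_of_nonneg_of_le_pi (x := a - c) (by linarith) (by linarith)
    have : Real.sin (c - a) = - Real.sin (a - c) := by rw [← Real.sin_neg]; ring_nf
    linarith
  have h3 : 0 < Real.sin (b - a) := Real.sin_pos_of_pos_of_lt_pi (by linarith) hab2
  nlinarith [mul_nonpos_of_nonneg_of_nonpos h1 ha, mul_nonpos_of_nonpos_of_nonneg h2 hb]

lemma eps_sum {n : ℕ} (d : Fin n → Fin n → ℝ) (hd : ∀ i j, d i j = d j i) :
    ∑ i, ∑ j, (if i ≤ j then (1:ℝ) else -1) * d i j = ∑ i, d i i := by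
  have hswap : ∑ i, ∑ j, (if i ≤ j then (1:ℝ) else -1) * d i j
      = ∑ i, ∑ j, (if j ≤ i then (1:ℝ) else -1) * d j i := Finset.sum_comm
  have hpair : ∀ i j : Fin n,
      (if i ≤ j then (1:ℝ) else -1) * d i j + (if j ≤ i then (1:ℝ) else -1) * d j i
        = if i = j then 2 * d i j else 0 := by
    intro i j
    rcases lt_trichotomy i j with h | h | h
    · rw [if_pos h.le, if_neg (not_le.2 h), if_neg h.ne, hd i j]; ring
    · subst h; simp; ring
    · rw [if_neg (not_le.2 h), if_pos h.le, if_neg h.ne', hd i j]; ring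
  have h2 : ∑ i : Fin n, ∑ j : Fin n,
      ((if i ≤ j then (1:ℝ) else -1) * d i j + (if j ≤ i then (1:ℝ) else -1) * d j i)
      = ∑ i, 2 * d i i := by
    refine Finset.sum_congr rfl fun i _ => ?_
    rw [Finset.sum_congr rfl fun j _ => hpair i j]
    simp [Finset.sum_ite_eq]
  have hkey : (∑ i, ∑ j, (if i ≤ j then (1:ℝ) else -1) * d i j)
      + (∑ i, ∑ j, (if j ≤ i then (1:ℝ) else -1) * d j i) = ∑ i, 2 * d i i := by
    rw [← Finset.sum_add_distrib]
    simp_rw [← Finset.sum_add_distrib]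
    exact h2
  have hmul : ∑ i, 2 * d i i = 2 * ∑ i, d i i := by rw [Finset.mul_sum]
  linarith [hkey, hswap, hmul]

/-- for vectors `vᵢ = rᵢ(cos θᵢ, sin θᵢ)` with
`0 = θ₁ < θ₂ < ⋯ < θₙ < π`, some `zᵢ = -v₁ - ⋯ - v_{i-1} + vᵢ + ⋯ + vₙ`
satisfies `zᵢ · (εᵢⱼ vⱼ) ≥ 0` for all `j`, so the minimal deviation angle
of the net is zero. -/
theorem stmt_6 (n : ℕ) (hn : 0 < n) (r θ : Fin n → ℝ) (hr : ∀ i, 0 < r i)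
    (hθ0 : θ ⟨0, hn⟩ = 0) (hθmono : StrictMono θ) (hθlt : ∀ i, θ i < π)
    (v : Fin n → Fin 2 → ℝ)
    (hv : ∀ i, v i = ![r i * Real.cos (θ i), r i * Real.sin (θ i)])
    (ε : Fin n → Fin n → ℝ) (hε : ∀ i j, ε i j = if i ≤ j then 1 else -1)
    (z : Fin n → Fin 2 → ℝ) (hz : ∀ i, z i = ∑ j, ε i j • v j) :
    ∃ i, ∀ j, 0 ≤ z i ⬝ᵥ (ε i j • v j) := by
  by_contra hcon
  push_neg at hcon
  obtain ⟨m, rfl⟩ : ∃ m, n = m + 1 := ⟨n - 1, (Nat.succ_pred_eq_of_pos hn).symm⟩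
  have hzero : (⟨0, hn⟩ : Fin (m + 1)) = 0 := rfl
  rw [hzero] at hθ0
  have hθnn : ∀ j : Fin (m + 1), 0 ≤ θ j := fun j => hθ0 ▸ hθmono.monotone (Fin.zero_le j)
  have hvv : ∀ j, v j ⬝ᵥ v j = r j ^ 2 := by
    intro j
    rw [hv]
    simp [dotProduct, Fin.sum_univ_two]
    nlinarith [Real.sin_sq_add_cos_sq (θ j)]
  have hdot : ∀ i j, z i ⬝ᵥ v j = ∑ k, ε i k * (v k ⬝ᵥ v j) := by
    intro i j
    rw [hz]
    simp only [dotProduct, Finset.sum_apply, Pi.smul_apply, smul_eq_mul,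
      Finset.sum_mul, Finset.mul_sum, mul_assoc]
    exact Finset.sum_comm
  have hdotw : ∀ i j : Fin (m + 1), z i ⬝ᵥ v j
      = r j * (z i 0 * Real.cos (θ j) + z i 1 * Real.sin (θ j)) := by
    intro i j
    rw [hv]
    simp [dotProduct, Fin.sum_univ_two]
    ring
  have hsum : ∑ i, z i ⬝ᵥ v i = ∑ i, r i ^ 2 := by
    calc ∑ i, z i ⬝ᵥ v i
        = ∑ i, ∑ k, (if i ≤ k then (1:ℝ) else -1) * (v k ⬝ᵥ v i) := by
          refine Finset.sum_congr rfl fun i _ => ?_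
          rw [hdot]
          exact Finset.sum_congr rfl fun k _ => by rw [hε]
      _ = ∑ i, (v i ⬝ᵥ v i) :=
          eps_sum (fun i k => v k ⬝ᵥ v i) (fun i j => dotProduct_comm (v j) (v i))
      _ = ∑ i, r i ^ 2 := Finset.sum_congr rfl fun i _ => hvv i
  have hprev1 : ∀ i : Fin (m + 1), i ≠ 0 →
      z i ⬝ᵥ v (i - 1) = z (i - 1) ⬝ᵥ v (i - 1) - 2 * r (i - 1) ^ 2 := by
    intro i hi
    have hiv : i.val ≠ 0 := fun h => hi (Fin.ext h)
    have hval : (i - 1).val + 1 = i.val := by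
      rw [Fin.coe_sub_one, if_neg hi]; omega
    set p := i - 1 with hp
    have hstep : z i ⬝ᵥ v p - z p ⬝ᵥ v p = ∑ k, (ε i k - ε p k) * (v k ⬝ᵥ v p) := by
      rw [hdot, hdot, ← Finset.sum_sub_distrib]
      exact Finset.sum_congr rfl fun k _ => by ring
    have hsingle : ∑ k, (ε i k - ε p k) * (v k ⬝ᵥ v p) = -2 * (v p ⬝ᵥ v p) := by
      rw [Finset.sum_eq_single p]
      · have hnip : ¬ i ≤ p := by rw [Fin.le_def]; omega
        rw [hε, hε, if_neg hnip, if_pos le_rfl]; ring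
      · intro k _ hk
        have hkv : k.val ≠ p.val := fun h => hk (Fin.ext h)
        have hiff : (i ≤ k) ↔ (p ≤ k) := by rw [Fin.le_def, Fin.le_def]; omega
        rw [hε, hε, if_congr hiff rfl rfl]; ring
      · simp
    have := hvv p
    linarith [hstep, hsingle]
  have hprev0 :
      z 0 ⬝ᵥ v (0 - 1) = 2 * r (0 - 1) ^ 2 - z (0 - 1) ⬝ᵥ v (0 - 1) := by
    set p : Fin (m + 1) := 0 - 1 with hp
    have hpval : p.val = m := by rw [hp, Fin.coe_sub_one, if_pos rfl]
    have hstep : z 0 ⬝ᵥ v p + z p ⬝ᵥ v p = ∑ k, (ε 0 k + ε p k) * (v k ⬝ᵥ v p) := by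
      rw [hdot, hdot, ← Finset.sum_add_distrib]
      exact Finset.sum_congr rfl fun k _ => by ring
    have hsingle : ∑ k, (ε 0 k + ε p k) * (v k ⬝ᵥ v p) = 2 * (v p ⬝ᵥ v p) := by
      rw [Finset.sum_eq_single p]
      · rw [hε, hε, if_pos (Fin.zero_le p), if_pos le_rfl]; ring
      · intro k _ hk
        have hkv : k.val ≠ p.val := fun h => hk (Fin.ext h)
        have hkn : k.val < m + 1 := k.isLt
        have hnpk : ¬ p ≤ k := by rw [Fin.le_def]; omega
        rw [hε, hε, if_pos (Fin.zero_le k), if_neg hnpk]; ring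
      · simp
    have := hvv p
    linarith [hstep, hsingle]
  have hsm : ∀ i j : Fin (m + 1), z i ⬝ᵥ (ε i j • v j) = ε i j * (z i ⬝ᵥ v j) := by
    intro i j
    rw [dotProduct_smul, smul_eq_mul]
  have crit : ∀ i : Fin (m + 1), 0 ≤ z i ⬝ᵥ v i →
      z (i - 1) ⬝ᵥ v (i - 1) ≤ 2 * r (i - 1) ^ 2 →
      ∀ j, 0 ≤ z i ⬝ᵥ (ε i j • v j) := by
    intro i h1 h2 j
    have hXi : 0 ≤ z i 0 * Real.cos (θ i) + z i 1 * Real.sin (θ i) := by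
      have hd := hdotw i i
      nlinarith [hr i, h1]
    by_cases hij : i ≤ j
    · rw [hsm, hε, if_pos hij, one_mul, hdotw]
      refine mul_nonneg (hr j).le ?_
      by_cases hi0 : i = 0
      · subst hi0
        by_cases hm : m = 0
        · subst hm
          have hj0 : j = 0 := Fin.ext (by omega)
          rw [hj0]
          exact hXi
        · set p : Fin (m + 1) := 0 - 1 with hp
          have hpval : p.val = m := by rw [hp, Fin.coe_sub_one, if_pos rfl]
          have hppos : (0 : Fin (m + 1)) < p := by
            rw [Fin.lt_def]
            simp [hpval]
            omega
          have hθp : 0 < θ p := hθ0 ▸ hθmono hppos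
          have hXp : 0 ≤ z 0 0 * Real.cos (θ p) + z 0 1 * Real.sin (θ p) := by
            have hd := hdotw 0 p
            nlinarith [hr p, h2, hprev0]
          have ha : z 0 0 * Real.cos (θ p - π) + z 0 1 * Real.sin (θ p - π) ≤ 0 := by
            rw [Real.cos_sub_pi, Real.sin_sub_pi]
            linarith
          have hjp : θ j ≤ θ p := by
            refine hθmono.monotone ?_
            rw [Fin.le_def, hpval]
            omega
          refine key_pos (z 0 0) (z 0 1) (θ p - π) (θ 0) (θ j)
            (by linarith [hθlt p, hθ0.ge, hθ0.le]) (by rw [hθ0]; linarith)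
            ha hXi (hθmono.monotone (Fin.zero_le j)) (by linarith)
      · set p := i - 1 with hp
        have hiv : i.val ≠ 0 := fun h => hi0 (Fin.ext h)
        have hval : p.val + 1 = i.val := by rw [hp, Fin.coe_sub_one, if_neg hi0]; omega
        have hpi : p < i := by rw [Fin.lt_def]; omega
        have hθpi : θ p < θ i := hθmono hpi
        have hXp : z i 0 * Real.cos (θ p) + z i 1 * Real.sin (θ p) ≤ 0 := by
          have hd := hdotw i p
          nlinarith [hr p, h2, hprev1 i hi0]
        exact key_pos _ _ (θ p) (θ i) (θ j) hθpi (by linarith [hθlt i, hθnn p]) hXp hXi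
          (hθmono.monotone hij) (by linarith [hθlt j, hθnn p])
    · have hji : j < i := not_le.1 hij
      have hi0 : i ≠ 0 := by
        intro h
        exact hij (h ▸ Fin.zero_le j)
      rw [hsm, hε, if_neg hij, hdotw]
      set p := i - 1 with hp
      have hiv : i.val ≠ 0 := fun h => hi0 (Fin.ext h)
      have hval : p.val + 1 = i.val := by rw [hp, Fin.coe_sub_one, if_neg hi0]; omega
      have hpi : p < i := by rw [Fin.lt_def]; omega
      have hθpi : θ p < θ i := hθmono hpi
      have hXp : z i 0 * Real.cos (θ p) + z i 1 * Real.sin (θ p) ≤ 0 := by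
        have hd := hdotw i p
        nlinarith [hr p, h2, hprev1 i hi0]
      have hjp : θ j ≤ θ p := by
        refine hθmono.monotone ?_
        rw [Fin.le_def]
        have := Fin.lt_def.1 hji
        omega
      have hXj : z i 0 * Real.cos (θ j) + z i 1 * Real.sin (θ j) ≤ 0 :=
        key_neg _ _ (θ p) (θ i) (θ j) hθpi (by linarith [hθlt i, hθnn p]) hXp hXi
          (by linarith [hθnn j, hθlt i]) hjp
      nlinarith [hr j, hXj]
  have hP : ∀ i : Fin (m + 1), 0 ≤ z i ⬝ᵥ v i →
      2 * r (i - 1) ^ 2 < z (i - 1) ⬝ᵥ v (i - 1) := by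
    intro i h1
    by_contra hle
    push_neg at hle
    obtain ⟨j, hj⟩ := hcon i
    exact absurd (crit i h1 hle j) (not_le.2 hj)
  have hrsum : 0 < ∑ i : Fin (m + 1), r i ^ 2 :=
    Finset.sum_pos (fun i _ => pow_pos (hr i) 2) ⟨0, Finset.mem_univ 0⟩
  by_cases hall : ∀ i : Fin (m + 1), z i ⬝ᵥ v i < 0
  · have : ∑ i : Fin (m + 1), z i ⬝ᵥ v i < 0 :=
      Finset.sum_neg (fun i _ => hall i) ⟨0, Finset.mem_univ 0⟩
    linarith
  · push_neg at hall
    obtain ⟨k, hk⟩ := hall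
    open Fin.CommRing in
    have chain : ∀ N : ℕ, 2 * r (k - (N + 1 : ℕ)) ^ 2
        < z (k - (N + 1 : ℕ)) ⬝ᵥ v (k - (N + 1 : ℕ)) := by
      intro N
      induction N with
      | zero =>
        have h := hP k hk
        simpa using h
      | succ N ih =>
        have h0 : 0 ≤ z (k - (N + 1 : ℕ)) ⬝ᵥ v (k - (N + 1 : ℕ)) :=
by
          have hnn : (0:ℝ) ≤ 2 * r (k - (N + 1 : ℕ)) ^ 2 := by positivity
          linarith [ih]
        have hstep := hP _ h0
        have heq : (k - ((N + 1 : ℕ) : Fin (m + 1))) - 1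
            = k - ((N + 1 + 1 : ℕ) : Fin (m + 1)) := by
          push_cast
          ring
        rw [heq] at hstep
        exact hstep
    open Fin.CommRing in
    have hall2 : ∀ j : Fin (m + 1), 2 * r j ^ 2 < z j ⬝ᵥ v j := by
      intro j
      have hc := chain ((k - j - 1 : Fin (m + 1))).val
      have heq : k - (((k - j - 1 : Fin (m + 1)).val + 1 : ℕ) : Fin (m + 1)) = j := by
        push_cast [Fin.cast_val_eq_self]
        ring
      rwa [heq] at hc
    have hlt : ∑ j : Fin (m + 1), 2 * r j ^ 2 < ∑ j : Fin (m + 1), z j ⬝ᵥ v j :=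
      Finset.sum_lt_sum_of_nonempty ⟨0, Finset.mem_univ 0⟩ (fun j _ => hall2 j)
    have hms : ∑ j : Fin (m + 1), 2 * r j ^ 2 = 2 * ∑ j : Fin (m + 1), r j ^ 2 := by
      rw [Finset.mul_sum]
    linarith
end

section
/- Let v₁, ..., vₙ ∈ ℝ^N be nonzero vectors with weights w₁, ..., wₙ > 0, not all contained in a line through the origin. For each u ≠ 0, choose εᵢ ∈ {±1} with u·(εᵢvᵢ) ≥ 0 (both choices allowed when u·vᵢ = 0) and set z = ∑wᵢεᵢvᵢ; the deviation angle of (u, z) is the angle between u and z. Then the maximal deviation angle over all admissible pairs (u, z) is strictly positive, and any maximizing u satisfies u·vᵢ = 0 for some i. -/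
open Real Matrix

private lemma dp_self_nonneg {N : ℕ} (u : Fin N → ℝ) : 0 ≤ u ⬝ᵥ u :=
  Finset.sum_nonneg fun i _ => mul_self_nonneg _

private lemma dp_self_pos {N : ℕ} {u : Fin N → ℝ} (h : u ≠ 0) : 0 < u ⬝ᵥ u :=
  lt_of_le_of_ne (dp_self_nonneg u) (fun h0 => h (dotProduct_self_eq_zero.mp h0.symm))

private lemma dp_cs {N : ℕ} (u z : Fin N → ℝ) : (u ⬝ᵥ z) ^ 2 ≤ (u ⬝ᵥ u) * (z ⬝ᵥ z) := by
  have := Finset.sum_mul_sq_le_sq_mul_sq Finset.univ u z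
  simpa [dotProduct, sq] using this

private lemma sum_dp {N n : ℕ} (f : Fin n → Fin N → ℝ) (x : Fin N → ℝ) :
    (∑ k, f k) ⬝ᵥ x = ∑ k, f k ⬝ᵥ x := by
  simp only [dotProduct, Finset.sum_apply, Finset.sum_mul]
  rw [Finset.sum_comm]

private lemma abs_dp_le {N : ℕ} (u z : Fin N → ℝ) :
    |u ⬝ᵥ z| ≤ Real.sqrt (u ⬝ᵥ u) * Real.sqrt (z ⬝ᵥ z) := by
  rw [← Real.sqrt_sq_eq_abs, ← Real.sqrt_mul (dp_self_nonneg u)]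
  exact Real.sqrt_le_sqrt (dp_cs u z)

private lemma ratio_le_one {N : ℕ} (u z : Fin N → ℝ) :
    (u ⬝ᵥ z) / (Real.sqrt (u ⬝ᵥ u) * Real.sqrt (z ⬝ᵥ z)) ≤ 1 :=
  le_trans (le_abs_self _) (by
    rw [abs_div, abs_of_nonneg (mul_nonneg (Real.sqrt_nonneg _) (Real.sqrt_nonneg _))]
    exact div_le_one_of_le₀ (abs_dp_le u z) (mul_nonneg (Real.sqrt_nonneg _) (Real.sqrt_nonneg _)))

private lemma neg_one_le_ratio {N : ℕ} (u z : Fin N → ℝ) :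
    -1 ≤ (u ⬝ᵥ z) / (Real.sqrt (u ⬝ᵥ u) * Real.sqrt (z ⬝ᵥ z)) := by
  have := neg_abs_le ((u ⬝ᵥ z) / (Real.sqrt (u ⬝ᵥ u) * Real.sqrt (z ⬝ᵥ z)))
  refine le_trans ?_ this
  rw [abs_div, abs_of_nonneg (mul_nonneg (Real.sqrt_nonneg _) (Real.sqrt_nonneg _))]
  have h1 : |u ⬝ᵥ z| / (Real.sqrt (u ⬝ᵥ u) * Real.sqrt (z ⬝ᵥ z)) ≤ 1 :=
    div_le_one_of_le₀ (abs_dp_le u z) (mul_nonneg (Real.sqrt_nonneg _) (Real.sqrt_nonneg _))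
  linarith

/-- Equality case of Cauchy–Schwarz for dot products. -/
private lemma dp_eq_case {N : ℕ} {u z : Fin N → ℝ} (hu : u ≠ 0)
    (h : (u ⬝ᵥ z) ^ 2 = (u ⬝ᵥ u) * (z ⬝ᵥ z)) (x : Fin N → ℝ) :
    (u ⬝ᵥ u) * (z ⬝ᵥ x) = (u ⬝ᵥ z) * (u ⬝ᵥ x) := by
  have hp : ((u ⬝ᵥ u) • z - (u ⬝ᵥ z) • u) = 0 := by
    rw [← dotProduct_self_eq_zero]
    have hexp : ((u ⬝ᵥ u) • z - (u ⬝ᵥ z) • u) ⬝ᵥ ((u ⬝ᵥ u) • z - (u ⬝ᵥ z) • u)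
        = (u ⬝ᵥ u) ^ 2 * (z ⬝ᵥ z) - 2 * (u ⬝ᵥ u) * (u ⬝ᵥ z) ^ 2 + (u ⬝ᵥ z) ^ 2 * (u ⬝ᵥ u) := by
      simp [sub_dotProduct, dotProduct_sub, smul_dotProduct, dotProduct_smul,
        dotProduct_comm z u]
      ring
    rw [hexp]
    nlinarith [dp_self_nonneg u]
  have := congrArg (fun y => y ⬝ᵥ x) hp
  simp [sub_dotProduct, smul_dotProduct] at this
  linarith

/-- If the "angle" is zero then `z` is proportional to `u` (dot-products with
anything agree up to the factor). -/
private lemma dp_angle_zero {N : ℕ} {u z : Fin N → ℝ} (hu : u ≠ 0)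
    (huz : 0 ≤ u ⬝ᵥ z)
    (h : Real.arccos ((u ⬝ᵥ z) / (Real.sqrt (u ⬝ᵥ u) * Real.sqrt (z ⬝ᵥ z))) = 0)
    (x : Fin N → ℝ) :
    (u ⬝ᵥ u) * (z ⬝ᵥ x) = (u ⬝ᵥ z) * (u ⬝ᵥ x) := by
  have hr : 1 ≤ (u ⬝ᵥ z) / (Real.sqrt (u ⬝ᵥ u) * Real.sqrt (z ⬝ᵥ z)) :=
    Real.arccos_eq_zero.mp h
  have heq : (u ⬝ᵥ z) ^ 2 = (u ⬝ᵥ u) * (z ⬝ᵥ z) := by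
    have hd : 0 ≤ Real.sqrt (u ⬝ᵥ u) * Real.sqrt (z ⬝ᵥ z) :=
      mul_nonneg (Real.sqrt_nonneg _) (Real.sqrt_nonneg _)
    have hge : Real.sqrt (u ⬝ᵥ u) * Real.sqrt (z ⬝ᵥ z) ≤ u ⬝ᵥ z := by
      rcases eq_or_lt_of_le hd with hd0 | hd0
      · rw [← hd0, div_zero] at hr; linarith
      · exact (one_le_div hd0).mp hr
    have h2 : (Real.sqrt (u ⬝ᵥ u) * Real.sqrt (z ⬝ᵥ z)) ^ 2 = (u ⬝ᵥ u) * (z ⬝ᵥ z) := by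
      rw [mul_pow, Real.sq_sqrt (dp_self_nonneg u), Real.sq_sqrt (dp_self_nonneg z)]
    have := dp_cs u z
    nlinarith
  exact dp_eq_case hu heq x

set_option maxHeartbeats 1000000 in
/-- the maximal deviation angle of a net whose edge vectors are
not all contained in a line is strictly positive, and any maximizing
direction `u` is orthogonal to some edge vector `vᵢ`. -/
theorem stmt_8 (N n : ℕ) (hn : 0 < n) (v : Fin n → Fin N → ℝ) (hv : ∀ i, v i ≠ 0)
    (w : Fin n → ℝ) (hw : ∀ i, 0 < w i)
    (hind : ∃ i j, LinearIndependent ℝ ![v i, v j])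
    (angle : (Fin N → ℝ) → (Fin N → ℝ) → ℝ)
    (hangle : ∀ u z, angle u z =
      Real.arccos ((u ⬝ᵥ z) / (Real.sqrt (u ⬝ᵥ u) * Real.sqrt (z ⬝ᵥ z))))
    (Adm : (Fin N → ℝ) → (Fin n → ℝ) → Prop)
    (hAdm : ∀ u ε, Adm u ε ↔
      u ≠ 0 ∧ (∀ i, ε i = 1 ∨ ε i = -1) ∧ ∀ i, 0 ≤ ε i * (u ⬝ᵥ v i))
    (A : Set ℝ)
    (hA : A = {a | ∃ u ε, Adm u ε ∧ a = angle u (∑ i, (w i * ε i) • v i)}) :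
    0 < sSup A ∧
      ∀ u ε, Adm u ε → angle u (∑ i, (w i * ε i) • v i) = sSup A →
        ∃ i, u ⬝ᵥ v i = 0 := by
  have hne : Nonempty (Fin n) := ⟨⟨0, hn⟩⟩
  have memA : ∀ u ε, Adm u ε → angle u (∑ i, (w i * ε i) • v i) ∈ A := by
    intro u ε h; rw [hA]; exact ⟨u, ε, h, rfl⟩
  have hBdd : BddAbove A := by
    refine ⟨π, fun a ha => ?_⟩
    rw [hA] at ha; obtain ⟨u, ε, _, rfl⟩ := ha
    rw [hangle]; exact Real.arccos_le_pi _
  have hz_dp : ∀ (u : Fin N → ℝ) (ε : Fin n → ℝ) (x : Fin N → ℝ),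
      (∑ i, (w i * ε i) • v i) ⬝ᵥ x = ∑ i, (w i * ε i) * (v i ⬝ᵥ x) := by
    intro u ε x
    rw [sum_dp]
    exact Finset.sum_congr rfl fun i _ => by rw [smul_dotProduct, smul_eq_mul]
  have hz_dp' : ∀ (u : Fin N → ℝ) (ε : Fin n → ℝ),
      u ⬝ᵥ (∑ i, (w i * ε i) • v i) = ∑ i, (w i * ε i) * (u ⬝ᵥ v i) := by
    intro u ε
    rw [dotProduct_comm, hz_dp u ε u]
    exact Finset.sum_congr rfl fun i _ => by rw [dotProduct_comm]
  -- Part 1: there is a positive element of A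
  have hpos : ∃ a ∈ A, 0 < a := by
    obtain ⟨i, j, hij⟩ := hind
    have hvii : 0 < v i ⬝ᵥ v i := dp_self_pos (hv i)
    set c : ℝ := (v i ⬝ᵥ v j) / (v i ⬝ᵥ v i) with hc
    set u : Fin N → ℝ := v j - c • v i with hu
    have hui : u ⬝ᵥ v i = 0 := by
      rw [hu, sub_dotProduct, smul_dotProduct, smul_eq_mul, hc,
        dotProduct_comm (v j) (v i)]
      field_simp
      ring
    have hu0 : u ≠ 0 := by
      intro h0
      have hvj : v j = c • v i := by
        have := sub_eq_zero.mp (hu ▸ h0)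
        exact this
      obtain ⟨h1, h2⟩ := linearIndependent_fin2.mp hij
      have hc0 : c ≠ 0 := by
        intro hc0; rw [hc0, zero_smul] at hvj; exact hv j hvj
      refine h2 c⁻¹ ?_
      show c⁻¹ • v j = v i
      rw [hvj, smul_smul, inv_mul_cancel₀ hc0, one_smul]
    have hvj' : u + c • v i = v j := sub_add_cancel (v j) (c • v i)
    have huj : 0 < u ⬝ᵥ v j := by
      rw [← hvj', dotProduct_add, dotProduct_smul, smul_eq_mul, hui, mul_zero, add_zero]
      exact dp_self_pos hu0
    set ε : Fin n → ℝ := fun k => if 0 ≤ u ⬝ᵥ v k then 1 else -1 with hε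
    have hεpm : ∀ k, ε k = 1 ∨ ε k = -1 := by
      intro k; by_cases h : 0 ≤ u ⬝ᵥ v k <;> simp [hε, h]
    have hεnn : ∀ k, 0 ≤ ε k * (u ⬝ᵥ v k) := by
      intro k; by_cases h : 0 ≤ u ⬝ᵥ v k <;> simp [hε, h] <;> nlinarith [lt_of_not_ge h]
    have hadmu : Adm u ε := (hAdm u ε).mpr ⟨hu0, hεpm, hεnn⟩
    set z := ∑ k, (w k * ε k) • v k with hzdef
    have huz : 0 < u ⬝ᵥ z := by
      rw [hzdef, hz_dp' u ε]
      refine Finset.sum_pos' (fun k _ => ?_) ⟨j, Finset.mem_univ j, ?_⟩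
      · have := hεnn k; have := hw k; nlinarith
      · have hεj : ε j = 1 := by simp [hε, huj.le]
        rw [hεj]; have := hw j; nlinarith
    by_cases hzero : angle u z = 0
    · -- flip the sign at i
      set ε' := Function.update ε i (-(ε i)) with hε'
      have hε'pm : ∀ k, ε' k = 1 ∨ ε' k = -1 := by
        intro k
        by_cases hk : k = i
        · subst hk; rw [hε', Function.update_self]
          rcases hεpm k with h | h <;> simp [h]
        · rw [hε', Function.update_of_ne hk]; exact hεpm k
      have hε'nn : ∀ k, 0 ≤ ε' k * (u ⬝ᵥ v k) := by
        intro k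
        by_cases hk : k = i
        · subst hk; rw [hui, mul_zero]
        · rw [hε', Function.update_of_ne hk]; exact hεnn k
      have hadmu' : Adm u ε' := (hAdm u ε').mpr ⟨hu0, hε'pm, hε'nn⟩
      set z' := ∑ k, (w k * ε' k) • v k with hz'def
      -- z ⬝ᵥ v i = 0 from the zero angle
      have hzvi : z ⬝ᵥ v i = 0 := by
        have h0 := dp_angle_zero hu0 huz.le (by rw [← hangle]; exact hzero) (v i)
        rw [hui, mul_zero] at h0
        have := dp_self_pos hu0
        by_contra h
        exact h (by nlinarith)
      -- z' ⬝ᵥ v i ≠ 0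
      have hdiff : z' ⬝ᵥ v i - z ⬝ᵥ v i = -2 * (w i * ε i) * (v i ⬝ᵥ v i) := by
        rw [hz'def, hzdef, hz_dp u ε' (v i), hz_dp u ε (v i), ← Finset.sum_sub_distrib]
        rw [Finset.sum_eq_single i]
        · rw [hε', Function.update_self]; ring
        · intro k _ hk
          rw [hε', Function.update_of_ne hk]; ring
        · intro h; exact absurd (Finset.mem_univ i) h
      have hεine : ε i ≠ 0 := by rcases hεpm i with h | h <;> rw [h] <;> norm_num
      have hz'vi : z' ⬝ᵥ v i ≠ 0 := by
        rw [hzvi] at hdiff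
        intro h0; rw [h0] at hdiff
        have := hw i
        rcases hεpm i with h | h <;> rw [h] at hdiff <;> nlinarith
      have huz' : 0 ≤ u ⬝ᵥ z' := by
        rw [hz'def, hz_dp' u ε']
        refine Finset.sum_nonneg fun k _ => ?_
        have := hε'nn k; have := hw k; nlinarith
      have hzero' : angle u z' ≠ 0 := by
        intro h0
        have h1 := dp_angle_zero hu0 huz' (by rw [← hangle]; exact h0) (v i)
        rw [hui, mul_zero] at h1
        have := dp_self_pos hu0
        exact hz'vi (by nlinarith)
      refine ⟨angle u z', memA u ε' hadmu', ?_⟩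
      have : 0 ≤ angle u z' := by rw [hangle]; exact Real.arccos_nonneg _
      exact lt_of_le_of_ne this (Ne.symm hzero')
    · refine ⟨angle u z, memA u ε hadmu, ?_⟩
      have : 0 ≤ angle u z := by rw [hangle]; exact Real.arccos_nonneg _
      exact lt_of_le_of_ne this (Ne.symm hzero)
  obtain ⟨a0, ha0A, ha0pos⟩ := hpos
  have h1 : 0 < sSup A := lt_of_lt_of_le ha0pos (le_csSup hBdd ha0A)
  refine ⟨h1, ?_⟩
  -- Part 2: a maximizer is orthogonal to some vᵢ
  intro u ε hadm hmax
  by_contra hcon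
  push_neg at hcon
  obtain ⟨hu0, hεpm, hεnn⟩ := (hAdm u ε).mp hadm
  set z := ∑ i, (w i * ε i) • v i with hzdef
  have hεne : ∀ k, ε k ≠ 0 := by
    intro k; rcases hεpm k with h | h <;> rw [h] <;> norm_num
  have hterm : ∀ k, 0 < ε k * (u ⬝ᵥ v k) := fun k =>
    lt_of_le_of_ne (hεnn k) (Ne.symm (mul_ne_zero (hεne k) (hcon k)))
  have ha : 0 < u ⬝ᵥ z := by
    rw [hzdef, hz_dp' u ε]
    refine Finset.sum_pos (fun k _ => ?_) Finset.univ_nonempty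
    have := hterm k; have := hw k; nlinarith
  have hz0 : z ≠ 0 := by
    intro h; rw [h, dotProduct_zero] at ha; exact lt_irrefl 0 ha
  have hb : 0 < z ⬝ᵥ z := dp_self_pos hz0
  have hnu : 0 < u ⬝ᵥ u := dp_self_pos hu0
  have hangpos : 0 < angle u z := by rw [hzdef] at *; rw [hmax]; exact h1
  have hd0 : 0 < Real.sqrt (u ⬝ᵥ u) * Real.sqrt (z ⬝ᵥ z) :=
    mul_pos (Real.sqrt_pos.mpr hnu) (Real.sqrt_pos.mpr hb)
  have hratlt : (u ⬝ᵥ z) / (Real.sqrt (u ⬝ᵥ u) * Real.sqrt (z ⬝ᵥ z)) < 1 :=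
    Real.arccos_pos.mp (by rw [← hangle]; exact hangpos)
  have haD : (u ⬝ᵥ z) ^ 2 < (u ⬝ᵥ u) * (z ⬝ᵥ z) := by
    have hlt : u ⬝ᵥ z < Real.sqrt (u ⬝ᵥ u) * Real.sqrt (z ⬝ᵥ z) := (div_lt_one hd0).mp hratlt
    have h2 : (Real.sqrt (u ⬝ᵥ u) * Real.sqrt (z ⬝ᵥ z)) ^ 2 = (u ⬝ᵥ u) * (z ⬝ᵥ z) := by
      rw [mul_pow, Real.sq_sqrt (dp_self_nonneg u), Real.sq_sqrt (dp_self_nonneg z)]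
    nlinarith
  -- choose the step size t
  set M : Fin n → ℝ := fun k => (ε k * (u ⬝ᵥ v k)) / (|z ⬝ᵥ v k| + 1) with hM
  have hMpos : ∀ k, 0 < M k := fun k =>
    div_pos (hterm k) (by positivity)
  set t := min ((u ⬝ᵥ z) / (2 * (z ⬝ᵥ z))) (Finset.univ.inf' Finset.univ_nonempty M) with htdef
  have ht0 : 0 < t := by
    refine lt_min (div_pos ha (by linarith)) ?_
    rw [Finset.lt_inf'_iff]
    exact fun k _ => hMpos k
  have htb : t * (z ⬝ᵥ z) < u ⬝ᵥ z := by
    have h2 : t ≤ (u ⬝ᵥ z) / (2 * (z ⬝ᵥ z)) := min_le_left _ _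
    have h3 : t * (2 * (z ⬝ᵥ z)) ≤ u ⬝ᵥ z := by
      rw [← le_div_iff₀ (by linarith)]; exact h2
    nlinarith
  have htk : ∀ k, t * |z ⬝ᵥ v k| < ε k * (u ⬝ᵥ v k) := by
    intro k
    have h1 : t ≤ M k := (min_le_right _ _).trans (Finset.inf'_le M (Finset.mem_univ k))
    have h2 : t * (|z ⬝ᵥ v k| + 1) ≤ ε k * (u ⬝ᵥ v k) := by
      rw [← le_div_iff₀ (by positivity)]; exact h1
    nlinarith [abs_nonneg (z ⬝ᵥ v k)]
  set u' := u - t • z with hu'def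
  have hu'v : ∀ k, 0 < ε k * (u' ⬝ᵥ v k) := by
    intro k
    have hdp : u' ⬝ᵥ v k = u ⬝ᵥ v k - t * (z ⬝ᵥ v k) := by
      rw [hu'def, sub_dotProduct, smul_dotProduct, smul_eq_mul]
    rw [hdp]
    have h1 := htk k
    have h2 := le_abs_self (z ⬝ᵥ v k)
    have h3 := neg_abs_le (z ⬝ᵥ v k)
    rcases hεpm k with h | h
    · rw [h] at h1 ⊢
      have h4 : t * (z ⬝ᵥ v k) ≤ t * |z ⬝ᵥ v k| := mul_le_mul_of_nonneg_left h2 ht0.le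
      linarith
    · rw [h] at h1 ⊢
      have h4 : t * (-|z ⬝ᵥ v k|) ≤ t * (z ⬝ᵥ v k) := mul_le_mul_of_nonneg_left h3 ht0.le
      linarith
  have hu'z : 0 < u' ⬝ᵥ z := by
    rw [hu'def, sub_dotProduct, smul_dotProduct, smul_eq_mul]
    linarith
  have hu'0 : u' ≠ 0 := by
    intro h; rw [h, zero_dotProduct] at hu'z; exact lt_irrefl 0 hu'z
  have hadm' : Adm u' ε := (hAdm u' ε).mpr ⟨hu'0, hεpm, fun k => (hu'v k).le⟩
  have hu'u' : u' ⬝ᵥ u' = u ⬝ᵥ u - 2 * t * (u ⬝ᵥ z) + t ^ 2 * (z ⬝ᵥ z) := by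
    rw [hu'def]
    simp only [sub_dotProduct, dotProduct_sub, smul_dotProduct, dotProduct_smul, smul_eq_mul,
      dotProduct_comm z u]
    ring
  have hnu' : 0 < u' ⬝ᵥ u' := dp_self_pos hu'0
  have hsu' : 0 < Real.sqrt (u' ⬝ᵥ u') := Real.sqrt_pos.mpr hnu'
  have hsu : 0 < Real.sqrt (u ⬝ᵥ u) := Real.sqrt_pos.mpr hnu
  have hsb : 0 < Real.sqrt (z ⬝ᵥ z) := Real.sqrt_pos.mpr hb
  have hu'zdp : u' ⬝ᵥ z = u ⬝ᵥ z - t * (z ⬝ᵥ z) := by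
    rw [hu'def, sub_dotProduct, smul_dotProduct, smul_eq_mul]
  have hkey : (u' ⬝ᵥ z) / (Real.sqrt (u' ⬝ᵥ u') * Real.sqrt (z ⬝ᵥ z)) <
      (u ⬝ᵥ z) / (Real.sqrt (u ⬝ᵥ u) * Real.sqrt (z ⬝ᵥ z)) := by
    rw [div_lt_div_iff₀ (mul_pos hsu' hsb) (mul_pos hsu hsb)]
    have hmain : (u' ⬝ᵥ z) * Real.sqrt (u ⬝ᵥ u) < (u ⬝ᵥ z) * Real.sqrt (u' ⬝ᵥ u') := by
      refine lt_of_pow_lt_pow_left₀ 2 (by positivity) ?_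
      rw [mul_pow, mul_pow, Real.sq_sqrt (dp_self_nonneg u), Real.sq_sqrt (dp_self_nonneg u'),
        hu'zdp, hu'u']
      nlinarith [mul_pos (mul_pos ht0 (sub_pos.mpr haD)) (by nlinarith : (0:ℝ) < 2 * (u ⬝ᵥ z) - t * (z ⬝ᵥ z))]
    calc (u' ⬝ᵥ z) * (Real.sqrt (u ⬝ᵥ u) * Real.sqrt (z ⬝ᵥ z))
        = ((u' ⬝ᵥ z) * Real.sqrt (u ⬝ᵥ u)) * Real.sqrt (z ⬝ᵥ z) := by ring
      _ < ((u ⬝ᵥ z) * Real.sqrt (u' ⬝ᵥ u')) * Real.sqrt (z ⬝ᵥ z) := by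
          exact mul_lt_mul_of_pos_right hmain hsb
      _ = (u ⬝ᵥ z) * (Real.sqrt (u' ⬝ᵥ u') * Real.sqrt (z ⬝ᵥ z)) := by ring
  have hanglt : angle u z < angle u' z := by
    rw [hangle u z, hangle u' z]
    exact strictAntiOn_arccos
      ⟨neg_one_le_ratio u' z, ratio_le_one u' z⟩
      ⟨neg_one_le_ratio u z, ratio_le_one u z⟩ hkey
  have hmem : angle u' z ∈ A := by rw [hzdef] at *; exact memA u' ε hadm'
  have hle : angle u' z ≤ sSup A := le_csSup hBdd hmem
  rw [hzdef] at hanglt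
  rw [hmax] at hanglt
  linarith
end

section
/- Let (X₀, Φ₀) be an N-dimensional net with a single vertex per period, edge vectors ±vᵢ with weights wᵢ (finitely many nonzero), realized harmonically with period homomorphism ρ. Let I ⊂ ℤ^N \ {0} with ℤ^N = I ⊔ (−I) ⊔ {0}, and split the vertex into v₀ and v₁ so that v₁ is the endpoint of the edges indexed by I, with a new connecting edge of weight w₀′ > 0. In the harmonic realization Φ₁ of the split net with Φ₁(v₀) = 0, the position x = Φ₁(v₁) satisfies x = (∑_{i∈I} wᵢvᵢ)/(w₀′ + ∑_{i∈I} wᵢ), where vᵢ = ρ(i). Moreover, T(X₀,Φ₀) − T(X₁,Φ₁) = (w₀′ + ∑_{i∈I} wᵢ)·x⊗x = (∑_{i∈I}wᵢvᵢ)⊗(∑_{i∈I}wᵢvᵢ)/(w₀′ + ∑_{i∈I}wᵢ). -/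
/-!
With `z = ∑ wᵢ vᵢ` and `W = w₀ + ∑ wᵢ`, the energy expands as
`E(y) = ∑ wᵢ ‖vᵢ‖² - 2 z·y + W ‖y‖²`, so completing the square gives
`E(y) - E(z/W) = W ‖y - z/W‖²` and the minimizer is `z/W`. The tension of the split net
expands in the same way to `T₀ - z⊗x - x⊗z + W x⊗x`, which is `T₀ - W x⊗x` once `z = W x`.
-/

open Matrix Finset

section VecMulVec

variable {ι m n R : Type*} [NonUnitalNonAssocSemiring R]

theorem sum_vecMulVec (s : Finset ι) (u : ι → m → R) (x : n → R) :
    vecMulVec (∑ i ∈ s, u i) x = ∑ i ∈ s, vecMulVec (u i) x := by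
  ext j k
  simp only [vecMulVec_apply, Finset.sum_apply, Matrix.sum_apply, sum_mul]

theorem vecMulVec_sum (s : Finset ι) (x : m → R) (u : ι → n → R) :
    vecMulVec x (∑ i ∈ s, u i) = ∑ i ∈ s, vecMulVec x (u i) := by
  ext j k
  simp only [vecMulVec_apply, Finset.sum_apply, Matrix.sum_apply, mul_sum]

end VecMulVec

section SplitNet

variable {ι m R : Type*} [Fintype ι]

/-- Energy of the split net with `v₀` at the origin and `v₁` at `y`: the edges of weight `w i`
join `v₁` to the translates `v i` of `v₀`, the new edge of weight `w₀` joins `v₀` and `v₁`. -/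
def splitEnergy [Fintype m] [CommRing R] (v : ι → m → R) (w : ι → R) (w₀ : R) (y : m → R) : R :=
  ∑ i, w i * ((v i - y) ⬝ᵥ (v i - y)) + w₀ * (y ⬝ᵥ y)

def splitTension [CommRing R] (v : ι → m → R) (w : ι → R) (w₀ : R) (x : m → R) :
    Matrix m m R :=
  ∑ i, w i • vecMulVec (v i - x) (v i - x) + w₀ • vecMulVec x x

theorem splitEnergy_eq [Fintype m] [CommRing R] (v : ι → m → R) (w : ι → R) (w₀ : R) (y : m → R) :
    splitEnergy v w w₀ y = ∑ i, w i * (v i ⬝ᵥ v i) - 2 * ((∑ i, w i • v i) ⬝ᵥ y)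
      + (w₀ + ∑ i, w i) * (y ⬝ᵥ y) := by
  simp only [splitEnergy, sub_dotProduct, dotProduct_sub, sum_dotProduct, smul_dotProduct,
    smul_eq_mul, dotProduct_comm y, mul_sub, sum_sub_distrib, add_mul, sum_mul]
  ring

theorem splitEnergy_sub_splitEnergy [Fintype m] [CommRing R] (v : ι → m → R) (w : ι → R) (w₀ : R)
    {c : m → R} (hc : (w₀ + ∑ i, w i) • c = ∑ i, w i • v i) (y : m → R) :
    splitEnergy v w w₀ y - splitEnergy v w w₀ c =
      (w₀ + ∑ i, w i) * ((y - c) ⬝ᵥ (y - c)) := by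
  simp only [splitEnergy_eq, ← hc, smul_dotProduct, sub_dotProduct, dotProduct_sub,
    dotProduct_comm y c, smul_eq_mul]
  ring

theorem eq_of_forall_splitEnergy_le [Fintype m] [Field R] [LinearOrder R] [IsStrictOrderedRing R]
    {v : ι → m → R} {w : ι → R} {w₀ : R} (hW : 0 < w₀ + ∑ i, w i) {x : m → R}
    (hmin : ∀ y, splitEnergy v w w₀ x ≤ splitEnergy v w w₀ y) :
    x = (w₀ + ∑ i, w i)⁻¹ • ∑ i, w i • v i := by
  set c := (w₀ + ∑ i, w i)⁻¹ • ∑ i, w i • v i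
  have hc : (w₀ + ∑ i, w i) • c = ∑ i, w i • v i := smul_inv_smul₀ hW.ne' _
  have hle : (w₀ + ∑ i, w i) * ((x - c) ⬝ᵥ (x - c)) ≤ 0 := by
    rw [← splitEnergy_sub_splitEnergy v w w₀ hc]
    exact sub_nonpos.mpr (hmin c)
  have hsq : (x - c) ⬝ᵥ (x - c) = 0 :=
    le_antisymm (nonpos_of_mul_nonpos_right hle hW)
      (Fintype.sum_nonneg fun _ => mul_self_nonneg _)
  exact sub_eq_zero.mp (dotProduct_self_eq_zero.mp hsq)

theorem splitTension_eq [CommRing R] (v : ι → m → R) (w : ι → R) (w₀ : R) (x : m → R) :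
    splitTension v w w₀ x = ∑ i, w i • vecMulVec (v i) (v i)
      - vecMulVec (∑ i, w i • v i) x - vecMulVec x (∑ i, w i • v i)
      + (w₀ + ∑ i, w i) • vecMulVec x x := by
  simp only [splitTension, sum_vecMulVec, vecMulVec_sum, sub_vecMulVec, vecMulVec_sub,
    smul_vecMulVec, vecMulVec_smul, smul_sub, sum_sub_distrib, add_smul, sum_smul]
  abel

end SplitNet

/-- after a single vertex splitting, the harmonic position `x`
of the new vertex (the minimizer of the quadratic energy) is the weighted
average `(∑ wᵢvᵢ)/(w₀′ + ∑ wᵢ)`, and the drop in the tension tensor equals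
`(w₀′ + ∑ wᵢ) x⊗x = (∑ wᵢvᵢ)⊗(∑ wᵢvᵢ)/(w₀′ + ∑ wᵢ)`. -/
theorem stmt_17 (N n : ℕ) (v : Fin n → Fin N → ℝ)
    (w : Fin n → ℝ) (hw : ∀ i, 0 ≤ w i)
    (w₀ : ℝ) (hw₀ : 0 < w₀) (x : Fin N → ℝ)
    (hmin : ∀ y : Fin N → ℝ,
      (∑ i, w i * ((v i - x) ⬝ᵥ (v i - x))) + w₀ * (x ⬝ᵥ x) ≤
      (∑ i, w i * ((v i - y) ⬝ᵥ (v i - y))) + w₀ * (y ⬝ᵥ y)) :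
    x = (w₀ + ∑ i, w i)⁻¹ • ∑ i, w i • v i ∧
    (∑ i, w i • Matrix.vecMulVec (v i) (v i)) -
        ((∑ i, w i • Matrix.vecMulVec (v i - x) (v i - x))
          + w₀ • Matrix.vecMulVec x x)
      = (w₀ + ∑ i, w i) • Matrix.vecMulVec x x ∧
    (w₀ + ∑ i, w i) • Matrix.vecMulVec x x
      = (w₀ + ∑ i, w i)⁻¹ •
          Matrix.vecMulVec (∑ i, w i • v i) (∑ i, w i • v i) := by
  have hW : 0 < w₀ + ∑ i, w i := add_pos_of_pos_of_nonneg hw₀ (sum_nonneg fun i _ => hw i)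
  have hx : x = (w₀ + ∑ i, w i)⁻¹ • ∑ i, w i • v i := eq_of_forall_splitEnergy_le hW hmin
  have hz : ∑ i, w i • v i = (w₀ + ∑ i, w i) • x := by rw [hx, smul_inv_smul₀ hW.ne']
  refine ⟨hx, ?_, ?_⟩
  · change _ - splitTension v w w₀ x = _
    rw [splitTension_eq, hz, smul_vecMulVec, vecMulVec_smul]
    abel
  · rw [hz, smul_vecMulVec, vecMulVec_smul, inv_smul_smul₀ hW.ne']
end
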